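/- For partial 1-cocycles f, g with values in S, the R-linear map ψ : Q_f ⊗_R Q_g → Q_{fg} defined by a ⊗ b ↦ ab is an isomorphism of R-modules. -/

import Mathlib

/-!
The Galois coordinates `x i, y i` produce, for a cocycle `f`, elements
`a i = ∑_h f(h)⁻¹ α_h(x i)` of `Q_f` and `b i = ∑_h f(h) α_h(y i u)` of `Q_{f⁻¹}` with
`∑ a i b i = tr u`; the trace is onto `R` by Nakayama, so `∑ a i b i = 1` for a suitable `u`.
Hence `Q_f Q_{f⁻¹} = R`, i.e. `Q_f` is an invertible `R`-submodule of `S`, and for invertible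
submodules multiplication `I ⊗ J → I J` is an isomorphism. Finally `Q_f Q_g = Q_{fg}`, the
inclusion `⊇` coming from `Q_{fg} = Q_f Q_{f⁻¹} Q_{fg} ⊆ Q_f Q_g`.
-/

/-- A unital partial action of a group `G` on a commutative ring `S`.
The unital ideal `S_g` is `S * e g` where `e g` is a central idempotent,
and `act g` is the partial isomorphism `α_g` (extended to all of `S` by
first multiplying by the identity `e g⁻¹` of its domain ideal). -/
structure PartialAction (G : Type*) [Group G] (S : Type*) [CommRing S] where
  e : G → S
  act : G → S → S
  e_idem : ∀ g, e g * e g = e g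
  e_one : e 1 = 1
  act_one : ∀ x, act 1 x = x
  act_add : ∀ g x y, act g (x + y) = act g x + act g y
  act_mul : ∀ g x y, act g (x * y) = act g x * act g y
  act_restrict : ∀ g x, act g (x * e g⁻¹) = act g x
  act_mem : ∀ g x, act g x * e g = act g x
  act_e : ∀ g, act g (e g⁻¹) = e g
  act_inter : ∀ g h, act g (e g⁻¹ * e h) = e g * e (g * h)
  act_comp : ∀ g h x, act g (act h x * e g⁻¹) = act (g * h) (x * e h⁻¹) * e g
  act_inv : ∀ g x, act g⁻¹ (act g (x * e g⁻¹)) = x * e g⁻¹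

namespace PartialAction

variable {G : Type*} [Group G] {S : Type*} [CommRing S] (P : PartialAction G S)

/-- The subring of subinvariants `S^α`. -/
def invariants : Set S := {a | ∀ g : G, P.act g (a * P.e g⁻¹) = a * P.e g}

/-- `S ⊇ R` is a partial Galois extension: `R = S^α` and there is a
partial Galois coordinate system. -/
def IsPartialGalois [Fintype G] [DecidableEq G] (R : Subring S) : Prop :=
  ((R : Set S) = P.invariants) ∧
    ∃ m : ℕ, ∃ x y : Fin m → S, ∀ g : G,
      (∑ i : Fin m, x i * P.act g (y i * P.e g⁻¹)) = if g = 1 then 1 else 0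

/-- A partial 1-cocycle with values in `S`: `f g` is invertible in the
unital ideal `S e g` with inverse `finv g`, and the cocycle identity holds. -/
structure Cocycle where
  f : G → S
  finv : G → S
  f_mem : ∀ g, f g * P.e g = f g
  finv_mem : ∀ g, finv g * P.e g = finv g
  f_mul_finv : ∀ g, f g * finv g = P.e g
  cocycle : ∀ g h, f (g * h) * P.e g = f g * P.act g (f h * P.e g⁻¹)

variable {P}

theorem act_zero (g : G) : P.act g 0 = 0 := by
  have := P.act_add g 0 0
  simpa using this.symm

/-- The set `Q_f = {a ∈ S : α_g(a 1_{g⁻¹}) = f(g) a for all g}` attached to a map `f : G → S`. -/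
def Qset (P : PartialAction G S) (f : G → S) : Set S :=
  {a | ∀ g : G, P.act g (a * P.e g⁻¹) = f g * a}

/-- `Q_f` as an `R`-submodule of `S`, where `R` is a subring of invariants. -/
def Qmod (P : PartialAction G S) (R : Subring S)
    (hR : ∀ r ∈ R, ∀ g : G, P.act g (r * P.e g⁻¹) = r * P.e g)
    (f : G → S) : Submodule R S where
  carrier := Qset P f
  zero_mem' := by
    intro g
    simp [Qset, act_zero]
  add_mem' := by
    intro a b ha hb g
    have := P.act_add g (a * P.e g⁻¹) (b * P.e g⁻¹)
    rw [Qset] at *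
    rw [add_mul, this, ha g, hb g, mul_add]
  smul_mem' := by
    intro c x hx g
    have hc : (c : S) ∈ (R : Set S) := c.2
    have hcx : c • x = (c : S) * x := Subring.smul_def c x
    have hx' : ∀ g : G, P.act g (x * P.e g⁻¹) = f g * x := hx
    rw [hcx]
    have h1 : P.act g ((c : S) * x * P.e g⁻¹) = P.act g ((c : S)) * P.act g x := by
      rw [P.act_restrict, P.act_mul]
    have h2 : P.act g ((c : S)) = (c : S) * P.e g := by
      rw [← P.act_restrict g (c : S), hR c c.2 g]
    have h3 : P.act g x = f g * x := by
      rw [← P.act_restrict g x]; exact hx' g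
    have h4 : (f g * x) * P.e g = f g * x := by
      have := P.act_mem g (x * P.e g⁻¹)
      rw [P.act_restrict, h3] at this
      exact this
    rw [h1, h2, h3]
    have h5 : (c : S) * P.e g * (f g * x) = (c : S) * (f g * x * P.e g) := by ring
    rw [h5, h4]
    ring

end PartialAction

namespace PartialAction

variable {G : Type*} [Group G] {S : Type*} [CommRing S] {P : PartialAction G S}

lemma act_sum {ι : Type*} (s : Finset ι) (g : G) (f : ι → S) :
    P.act g (∑ i ∈ s, f i) = ∑ i ∈ s, P.act g (f i) :=
  map_sum (AddMonoidHom.mk' (P.act g) (P.act_add g)) f s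

lemma act_apply_one (g : G) : P.act g 1 = P.e g := by
  rw [← P.act_restrict, one_mul, P.act_e]

lemma act_mul_e (k g : G) (x : S) : P.act k (x * P.e (k⁻¹ * g)) = P.act k x * P.e g := by
  have h : P.act k (P.e (k⁻¹ * g)) = P.e k * P.e g := by
    rw [← P.act_restrict, mul_comm, P.act_inter, mul_inv_cancel_left]
  rw [P.act_mul, h, ← mul_assoc, P.act_mem]

lemma act_act (g h : G) (x : S) : P.act g (P.act h x) = P.act (g * h) x * P.e g := by
  have h_inv : h⁻¹ = (g * h)⁻¹ * g := by group
  rw [← P.act_restrict g (P.act h x), P.act_comp, h_inv, act_mul_e, mul_assoc, P.e_idem]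

lemma mem_Qset_iff {f : G → S} {a : S} : a ∈ Qset P f ↔ ∀ g, P.act g a = f g * a := by
  simp only [Qset, Set.mem_ofPred_eq, P.act_restrict]

lemma mem_invariants_iff {a : S} : a ∈ P.invariants ↔ ∀ g, P.act g a = a * P.e g := by
  simp only [invariants, Set.mem_ofPred_eq, P.act_restrict]

lemma Qset_e : Qset P P.e = P.invariants := by
  ext a
  simp only [mem_Qset_iff, mem_invariants_iff, mul_comm]

lemma Qset_mul {f₁ f₂ : G → S} {a b : S} (ha : a ∈ Qset P f₁) (hb : b ∈ Qset P f₂) :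
    a * b ∈ Qset P (f₁ * f₂) := by
  rw [mem_Qset_iff] at *
  intro g
  rw [P.act_mul, ha, hb, Pi.mul_apply]
  ring

namespace Cocycle

variable (c : P.Cocycle)

lemma f_mul_finv_eq : c.f * c.finv = P.e :=
  funext c.f_mul_finv

lemma act_finv (g h : G) : P.act g (c.finv h) = c.f g * c.finv (g * h) * P.e g := by
  set A := P.act g (c.f h)
  set B := P.act g (c.finv h)
  have hB_gh : B * P.e (g * h) = B := by
    rw [← act_mul_e g (g * h), inv_mul_cancel_left, c.finv_mem]
  have hB_g : B * P.e g = B := P.act_mem g _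
  have hAB : A * B = P.e g * P.e (g * h) := by
    rw [← P.act_mul, c.f_mul_finv]
    simpa [act_apply_one] using act_mul_e g (g * h) (1 : S)
  have hcoc : c.f (g * h) * P.e g = c.f g * A := by
    rw [c.cocycle, P.act_restrict]
  -- `B = B e_g e_{gh} = f(g) f⁻¹(gh) A B = f(g) f⁻¹(gh) e_g e_{gh}`
  linear_combination (-1 : S) * hB_g - P.e g * hB_gh - B * P.e g * c.f_mul_finv (g * h)
    + B * c.finv (g * h) * hcoc + c.f g * c.finv (g * h) * hAB
    + c.f g * P.e g * c.finv_mem (g * h)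

def inv : P.Cocycle where
  f := c.finv
  finv := c.f
  f_mem := c.finv_mem
  finv_mem := c.f_mem
  f_mul_finv g := by rw [mul_comm, c.f_mul_finv]
  cocycle g h := by
    rw [P.act_restrict, c.act_finv]
    linear_combination (-(c.finv (g * h) * P.e g)) * c.f_mul_finv g
      - c.finv (g * h) * P.e_idem g

end Cocycle

section Trace

variable [Fintype G]

variable (P) in
def tr (s : S) : S := ∑ g, P.act g s

def twistedTrace (c : P.Cocycle) (s : S) : S := ∑ h, c.finv h * P.act h s

lemma tr_add (s t : S) : tr P (s + t) = tr P s + tr P t := by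
  simp only [tr, P.act_add, Finset.sum_add_distrib]

lemma tr_mul_of_mem_invariants {r : S} (hr : r ∈ P.invariants) (s : S) :
    tr P (r * s) = r * tr P s := by
  rw [tr, tr, Finset.mul_sum]
  refine Finset.sum_congr rfl fun g _ => ?_
  rw [P.act_mul, mem_invariants_iff.1 hr, mul_assoc, mul_comm (P.e g), P.act_mem]

lemma tr_mem_invariants (s : S) : tr P s ∈ P.invariants := by
  refine mem_invariants_iff.2 fun g => ?_
  rw [tr, act_sum, Finset.sum_mul]
  simp only [act_act]
  exact Equiv.sum_comp (Equiv.mulLeft g) (fun k => P.act k s * P.e g)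

lemma twistedTrace_mem_Qset (c : P.Cocycle) (s : S) : twistedTrace c s ∈ Qset P c.f := by
  refine mem_Qset_iff.2 fun g => ?_
  have hterm : ∀ h, P.act g (c.finv h * P.act h s)
      = c.f g * (c.finv (g * h) * P.act (g * h) s) := fun h => by
    rw [P.act_mul, c.act_finv, act_act]
    linear_combination (c.finv (g * h) * P.act (g * h) s) *
      (c.f g * P.e_idem g + c.f_mem g)
  rw [twistedTrace, act_sum, Finset.mul_sum]
  simp only [hterm]
  exact Equiv.sum_comp (Equiv.mulLeft g) (fun k => c.f g * (c.finv k * P.act k s))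

end Trace

section GaloisCoordinates

variable [DecidableEq G]

variable (P) in
def IsGaloisCoordinates {m : ℕ} (x y : Fin m → S) : Prop :=
  ∀ g : G, ∑ i, x i * P.act g (y i) = if g = 1 then 1 else 0

lemma IsPartialGalois.exists_isGaloisCoordinates [Fintype G] {R : Subring S}
    (hGal : P.IsPartialGalois R) :
    ∃ (m : ℕ) (x y : Fin m → S), IsGaloisCoordinates P x y := by
  obtain ⟨-, m, x, y, hxy⟩ := hGal
  exact ⟨m, x, y, fun g => by simpa only [P.act_restrict] using hxy g⟩

namespace IsGaloisCoordinates

variable {m : ℕ} {x y : Fin m → S} (hxy : IsGaloisCoordinates P x y)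
include hxy

lemma sum_act_mul (g : G) : ∑ i, P.act g (x i) * y i = if g = 1 then 1 else 0 := by
  have hterm : ∀ i, P.act g (x i * P.act g⁻¹ (y i)) = P.act g (x i) * y i := fun i => by
    rw [P.act_mul, act_act, mul_inv_cancel, P.act_one, mul_comm (y i), ← mul_assoc, P.act_mem]
  have h := congrArg (P.act g) (hxy g⁻¹)
  simp only [act_sum, hterm, apply_ite (P.act g), act_apply_one, act_zero, inv_eq_one] at h
  rw [h]
  split_ifs with hg
  · rw [hg, P.e_one]
  · rfl

lemma sum_tr_mul_mul [Fintype G] (s : S) : ∑ i, tr P (s * x i) * y i = s := by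
  simp only [tr, Finset.sum_mul, P.act_mul]
  rw [Finset.sum_comm]
  simp only [mul_assoc, ← Finset.mul_sum, hxy.sum_act_mul, mul_ite, mul_one, mul_zero,
    Finset.sum_ite_eq', Finset.mem_univ, if_true, P.act_one]

lemma sum_mul_tr [Fintype G] : ∑ i, x i * tr P (y i) = 1 := by
  simp only [tr, Finset.mul_sum]
  rw [Finset.sum_comm]
  simp only [hxy _, Finset.sum_ite_eq', Finset.mem_univ, if_true]

lemma sum_act_mul_act_mul_e (g h : G) :
    (∑ i, P.act g (x i) * P.act h (y i)) * P.e g = if g = h then P.e g else 0 := by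
  have hterm : ∀ i, P.act g (x i) * P.act h (y i) * P.e g
      = P.act g (x i * P.act (g⁻¹ * h) (y i)) := fun i => by
    rw [P.act_mul, act_act, mul_inv_cancel_left, mul_assoc]
  simp only [Finset.sum_mul, hterm, ← act_sum, hxy (g⁻¹ * h), apply_ite (P.act g),
    act_apply_one, act_zero, inv_mul_eq_one]

lemma sum_twistedTrace_mul_twistedTrace [Fintype G] (c : P.Cocycle) (s : S) :
    ∑ i, twistedTrace c (x i) * twistedTrace c.inv (y i * s) = tr P s := by
  have hterm : ∀ g h, ∑ i, c.finv g * P.act g (x i) * (c.f h * P.act h (y i * s))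
      = if g = h then P.act g s else 0 := fun g h => by
    calc _ = c.finv g * c.f h * P.act h s * ((∑ i, P.act g (x i) * P.act h (y i)) * P.e g) := by
          rw [Finset.sum_mul, Finset.mul_sum]
          refine Finset.sum_congr rfl fun i _ => ?_
          rw [P.act_mul]
          linear_combination (-(c.f h * P.act h s * P.act g (x i) * P.act h (y i))) *
            c.finv_mem g
      _ = _ := by
          rw [hxy.sum_act_mul_act_mul_e]
          split_ifs with hgh
          · subst hgh
            linear_combination (P.act g s * P.e g) * c.f_mul_finv g +
              (P.e g + 1) * P.act_mem g s
          · rw [mul_zero]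
  calc ∑ i, twistedTrace c (x i) * twistedTrace c.inv (y i * s)
      = ∑ g, ∑ h, ∑ i, c.finv g * P.act g (x i) * (c.f h * P.act h (y i * s)) := by
        simp only [twistedTrace, Cocycle.inv, Finset.sum_mul_sum]
        rw [Finset.sum_comm]
        exact Finset.sum_congr rfl fun g _ => Finset.sum_comm
    _ = tr P s := by simp only [hterm, Finset.sum_ite_eq, Finset.mem_univ, if_true, tr]

end IsGaloisCoordinates

end GaloisCoordinates

section Nakayama

variable [Fintype G] [DecidableEq G] {R : Subring S}

lemma IsPartialGalois.mem_iff (hGal : P.IsPartialGalois R) {a : S} :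
    a ∈ R ↔ a ∈ P.invariants := by
  rw [← SetLike.mem_coe, hGal.1]

def IsPartialGalois.trLinear (hGal : P.IsPartialGalois R) : S →ₗ[R] R where
  toFun s := ⟨tr P s, hGal.mem_iff.2 (tr_mem_invariants s)⟩
  map_add' s t := Subtype.ext (tr_add s t)
  map_smul' r s := Subtype.ext (tr_mul_of_mem_invariants (hGal.mem_iff.1 r.2) s)

/- The trace ideal `tr(S)` of `R` satisfies `tr(S) • S = S`, and `S` is finitely generated
over `R` by the Galois coordinates, so Nakayama's lemma makes it the unit ideal. -/
lemma IsPartialGalois.exists_tr_eq_one (hGal : P.IsPartialGalois R) : ∃ u, tr P u = 1 := by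
  obtain ⟨m, x, y, hxy⟩ := hGal.exists_isGaloisCoordinates
  set T := hGal.trLinear
  have hspan : Submodule.span R (Set.range y) = ⊤ :=
    top_unique fun s _ => (Submodule.mem_span_range_iff_exists_fun R).2
      ⟨fun i => T (s * x i), hxy.sum_tr_mul_mul s⟩
  have hle : (⊤ : Submodule R S) ≤ LinearMap.range T • ⊤ := fun s _ => by
    have hs : s = ∑ i, T (y i) • (s * x i) := by
      calc s = s * ∑ i, x i * tr P (y i) := by rw [hxy.sum_mul_tr, mul_one]
        _ = _ := by
          rw [Finset.mul_sum]
          exact Finset.sum_congr rfl fun i _ => by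
            show s * (x i * tr P (y i)) = tr P (y i) * (s * x i)
            ring
    rw [hs]
    exact Submodule.sum_mem _ fun i _ =>
      Submodule.smul_mem_smul (LinearMap.mem_range_self T (y i)) trivial
  obtain ⟨_, ⟨u, rfl⟩, hu⟩ := Submodule.exists_mem_and_smul_eq_self_of_fg_of_le_smul _ ⊤
    (hspan ▸ Submodule.fg_span (Set.finite_range y)) hle
  have h1 := hu 1 trivial
  rw [Subring.smul_def, smul_eq_mul, mul_one] at h1
  exact ⟨u, h1⟩

end Nakayama

section Qmod

variable {R : Subring S} (hR : ∀ r ∈ R, ∀ g : G, P.act g (r * P.e g⁻¹) = r * P.e g)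

lemma Qmod_mul_Qmod_le (f₁ f₂ : G → S) :
    Qmod P R hR f₁ * Qmod P R hR f₂ ≤ Qmod P R hR (f₁ * f₂) :=
  Submodule.mul_le.2 fun _ ha _ hb => Qset_mul ha hb

variable [Fintype G] [DecidableEq G]

lemma Qmod_mul_Qmod_finv (hGal : P.IsPartialGalois R) (c : P.Cocycle) :
    Qmod P R hR c.f * Qmod P R hR c.finv = 1 := by
  refine le_antisymm (Submodule.mul_le.2 fun a ha b hb => ?_) (Submodule.one_le.2 ?_)
  · have hab : a * b ∈ P.invariants := by
      rw [← Qset_e, ← c.f_mul_finv_eq]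
      exact Qset_mul ha hb
    exact Submodule.mem_one.2 ⟨⟨a * b, hGal.mem_iff.2 hab⟩, rfl⟩
  · obtain ⟨m, x, y, hxy⟩ := hGal.exists_isGaloisCoordinates
    obtain ⟨u, hu⟩ := hGal.exists_tr_eq_one
    rw [← hu, ← hxy.sum_twistedTrace_mul_twistedTrace c u]
    exact Submodule.sum_mem _ fun i _ => Submodule.mul_mem_mul
      (twistedTrace_mem_Qset c _) (twistedTrace_mem_Qset c.inv _)

lemma Qmod_mul_Qmod (hGal : P.IsPartialGalois R) (c c' : P.Cocycle) :
    Qmod P R hR c.f * Qmod P R hR c'.f = Qmod P R hR (c.f * c'.f) := by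
  refine le_antisymm (Qmod_mul_Qmod_le hR _ _) ?_
  have hcancel : c.finv * (c.f * c'.f) = c'.f := by
    rw [mul_left_comm, ← mul_assoc, c.f_mul_finv_eq]
    exact funext fun g => by rw [Pi.mul_apply, mul_comm, c'.f_mem]
  calc Qmod P R hR (c.f * c'.f)
      = Qmod P R hR c.f * Qmod P R hR c.finv * Qmod P R hR (c.f * c'.f) := by
        rw [Qmod_mul_Qmod_finv hR hGal, one_mul]
    _ ≤ Qmod P R hR c.f * Qmod P R hR (c.finv * (c.f * c'.f)) := by
        rw [mul_assoc]
        exact mul_le_mul_right (Qmod_mul_Qmod_le hR _ _) _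
    _ = Qmod P R hR c.f * Qmod P R hR c'.f := by rw [hcancel]

end Qmod

end PartialAction

open TensorProduct in
/-- `ψ : Q_f ⊗_R Q_g → Q_{fg}`, `a ⊗ b ↦ ab`, is an `R`-module isomorphism. -/
theorem Qmod_tensor_equiv {G : Type*} [CommGroup G] [Fintype G] [DecidableEq G]
    {S : Type*} [CommRing S] (P : PartialAction G S) (R : Subring S)
    (hR : ∀ r ∈ R, ∀ g : G, P.act g (r * P.e g⁻¹) = r * P.e g)
    (hGal : P.IsPartialGalois R)
    (c c' cc' : P.Cocycle) (hmul : ∀ g : G, cc'.f g = c.f g * c'.f g) :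
    ∃ ψ : (PartialAction.Qmod P R hR c.f ⊗[R] PartialAction.Qmod P R hR c'.f) ≃ₗ[R]
        PartialAction.Qmod P R hR cc'.f,
      ∀ (a : PartialAction.Qmod P R hR c.f) (b : PartialAction.Qmod P R hR c'.f),
        (ψ (a ⊗ₜ[R] b) : S) = (a : S) * (b : S) := by
  have hprod : PartialAction.Qmod P R hR c.f * PartialAction.Qmod P R hR c'.f
      = PartialAction.Qmod P R hR cc'.f := by
    rw [PartialAction.Qmod_mul_Qmod hR hGal, show cc'.f = c.f * c'.f from funext hmul]
  let unit (d : P.Cocycle) : (Submodule R S)ˣ :=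
    Units.mkOfMulEqOne _ _ (PartialAction.Qmod_mul_Qmod_finv hR hGal d)
  exact ⟨Submodule.tensorEquivMul (unit c) (unit c') ≪≫ₗ LinearEquiv.ofEq _ _ hprod,
    fun _ _ => rfl⟩
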